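/- The linearized operator L_q u = (1/2)u'' − (u·(J*q) + q·(J*u))', acting on C² functions u on S with ∫_S u = 0, is symmetric with respect to the inner product (u,v)_{−1,1/q} = ∫_S (1/q)·U·V, where U, V are the primitives of u, v normalized so that ∫_S U/q = ∫_S V/q = 0. -/

import Mathlib

open Real MeasureTheory

/-- Modified Bessel function of the first kind of order `j` (integral formula). -/
noncomputable def besselI (j : ℕ) (x : ℝ) : ℝ :=
  (1 / (2 * π)) * ∫ θ in (0:ℝ)..(2 * π), (Real.cos θ) ^ j * Real.exp (x * Real.cos θ)

/-- The stationary density `q(θ) = exp(2Kr cos θ)/(2π I₀(2Kr))`. -/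
noncomputable def q (K r θ : ℝ) : ℝ :=
  Real.exp (2 * K * r * Real.cos θ) / (2 * π * besselI 0 (2 * K * r))

/-- Convolution with `J(θ) = -K sin θ` on the circle. -/
noncomputable def Jconv (K : ℝ) (p : ℝ → ℝ) (θ : ℝ) : ℝ :=
  ∫ θ' in (0:ℝ)..(2 * π), (-K * Real.sin (θ - θ')) * p θ'

/-!
The self-consistency equation `r = I₁(2Kr)/I₀(2Kr)` says exactly that `∫ cos · q = r`, so
`J * q = -K r sin = q' / (2q)`. With this, `(P_u V - P_v U)/q`, where `P_u` is the primitive of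
`L_q u`, differs from the derivative of the periodic function `(uV - vU)/(2q)` by
`(J*u) V - (J*v) U`. That remainder integrates to zero: `J` is a trigonometric polynomial of
degree one, and integrating by parts gives
`∫ (J*u) V = -K ((∫ cos·u)(∫ cos·v) + (∫ sin·u)(∫ sin·v))`, which is symmetric in `u` and `v`.
-/

lemma integral_sin_mul_comp_cos (g : ℝ → ℝ) :
    ∫ θ in (0:ℝ)..(2 * π), sin θ * g (cos θ) = 0 := by
  have h := intervalIntegral.integral_comp_sub_left (fun θ => sin θ * g (cos θ))
    (a := 0) (b := 2 * π) (2 * π)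
  simp only [sin_two_pi_sub, cos_two_pi_sub, sub_self, sub_zero, neg_mul,
    intervalIntegral.integral_neg] at h
  linarith

lemma besselI_zero_pos (x : ℝ) : 0 < besselI 0 x :=
  mul_pos (by positivity) (intervalIntegral.intervalIntegral_pos_of_pos
    (Continuous.intervalIntegrable (by fun_prop) _ _) (fun θ => by positivity) two_pi_pos)

lemma eq_of_hasDerivAt_of_integral_eq_zero {u U : ℝ → ℝ} {a b : ℝ}
    (hU : ∀ t, HasDerivAt U (u t) t) (hu : Continuous u) (h0 : ∫ t in a..b, u t = 0) :
    U b = U a := by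
  have := intervalIntegral.integral_eq_sub_of_hasDerivAt (fun t _ => hU t)
    (hu.intervalIntegrable a b)
  linarith

lemma integral_deriv_mul_eq_neg_integral_mul_deriv {f f' g g' : ℝ → ℝ} {a b : ℝ}
    (hf : ∀ t, HasDerivAt f (f' t) t) (hg : ∀ t, HasDerivAt g (g' t) t)
    (hf' : Continuous f') (hg' : Continuous g') (hfg : f b * g b = f a * g a) :
    ∫ t in a..b, f' t * g t = -∫ t in a..b, f t * g' t := by
  rw [intervalIntegral.integral_mul_deriv_eq_deriv_mul (fun t _ => hf t) (fun t _ => hg t)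
    (hf'.intervalIntegrable a b) (hg'.intervalIntegrable a b), hfg]
  ring

section Density

variable (K r : ℝ)

lemma q_pos (θ : ℝ) : 0 < q K r θ := by
  have := besselI_zero_pos (2 * K * r)
  unfold q
  positivity

lemma continuous_q : Continuous (q K r) := by
  unfold q
  fun_prop

lemma q_two_pi : q K r (2 * π) = q K r 0 := by
  simp [q]

lemma hasDerivAt_q (θ : ℝ) :
    HasDerivAt (q K r) (-(2 * K * r) * sin θ * q K r θ) θ := by
  have h := (((hasDerivAt_cos θ).const_mul (2 * K * r)).exp).div_const
    (2 * π * besselI 0 (2 * K * r))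
  refine h.congr_deriv ?_
  simp only [q]
  ring

lemma integral_cos_mul_q :
    ∫ θ in (0:ℝ)..(2 * π), cos θ * q K r θ = besselI 1 (2 * K * r) / besselI 0 (2 * K * r) := by
  have h (θ : ℝ) : cos θ * q K r θ
      = 1 / (2 * π) * (cos θ ^ 1 * exp (2 * K * r * cos θ)) / besselI 0 (2 * K * r) := by
    simp only [q]
    field_simp
  rw [intervalIntegral.integral_congr fun θ _ => h θ, intervalIntegral.integral_div,
    intervalIntegral.integral_const_mul]
  rfl

lemma integral_sin_mul_q : ∫ θ in (0:ℝ)..(2 * π), sin θ * q K r θ = 0 := by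
  simpa [q, mul_div_assoc'] using
    integral_sin_mul_comp_cos (fun c => exp (2 * K * r * c) / (2 * π * besselI 0 (2 * K * r)))

end Density

lemma Jconv_eq (K : ℝ) {p : ℝ → ℝ} (hp : Continuous p) (θ : ℝ) :
    Jconv K p θ = -K * sin θ * (∫ t in (0:ℝ)..(2 * π), cos t * p t)
      + K * cos θ * (∫ t in (0:ℝ)..(2 * π), sin t * p t) := by
  have h (t : ℝ) : -K * sin (θ - t) * p t
      = -K * sin θ * (cos t * p t) + K * cos θ * (sin t * p t) := by
    rw [sin_sub]; ring
  simp only [Jconv, h]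
  rw [intervalIntegral.integral_add ((by fun_prop : Continuous _).intervalIntegrable _ _)
      ((by fun_prop : Continuous _).intervalIntegrable _ _),
    intervalIntegral.integral_const_mul, intervalIntegral.integral_const_mul]

lemma continuous_Jconv (K : ℝ) {p : ℝ → ℝ} (hp : Continuous p) : Continuous (Jconv K p) := by
  rw [funext (Jconv_eq K hp)]
  fun_prop

lemma Jconv_q {K r : ℝ} (hfix : r = besselI 1 (2 * K * r) / besselI 0 (2 * K * r)) (θ : ℝ) :
    Jconv K (q K r) θ = -(K * r) * sin θ := by
  rw [Jconv_eq K (continuous_q K r), integral_cos_mul_q, integral_sin_mul_q, ← hfix]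
  ring

lemma integral_sin_mul_of_hasDerivAt {v V : ℝ → ℝ} (hV : ∀ t, HasDerivAt V (v t) t)
    (hv : Continuous v) (hV2 : V (2 * π) = V 0) :
    ∫ t in (0:ℝ)..(2 * π), sin t * V t = ∫ t in (0:ℝ)..(2 * π), cos t * v t := by
  simpa using integral_deriv_mul_eq_neg_integral_mul_deriv (f := fun t => -cos t)
    (fun t => (hasDerivAt_cos t).neg.congr_deriv (neg_neg _)) hV continuous_sin hv (by simp [hV2])

lemma integral_cos_mul_of_hasDerivAt {v V : ℝ → ℝ} (hV : ∀ t, HasDerivAt V (v t) t)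
    (hv : Continuous v) (hV2 : V (2 * π) = V 0) :
    ∫ t in (0:ℝ)..(2 * π), cos t * V t = -∫ t in (0:ℝ)..(2 * π), sin t * v t :=
  integral_deriv_mul_eq_neg_integral_mul_deriv hasDerivAt_sin hV continuous_cos hv (by simp [hV2])

lemma integral_Jconv_mul (K : ℝ) {u v V : ℝ → ℝ} (hu : Continuous u) (hv : Continuous v)
    (hV : ∀ t, HasDerivAt V (v t) t) (hV2 : V (2 * π) = V 0) :
    ∫ θ in (0:ℝ)..(2 * π), Jconv K u θ * V θ
      = -K * ((∫ t in (0:ℝ)..(2 * π), cos t * u t) * (∫ t in (0:ℝ)..(2 * π), cos t * v t)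
        + (∫ t in (0:ℝ)..(2 * π), sin t * u t) * (∫ t in (0:ℝ)..(2 * π), sin t * v t)) := by
  have hVc : Continuous V := continuous_iff_continuousAt.2 fun t => (hV t).continuousAt
  have h (θ : ℝ) : Jconv K u θ * V θ
      = (-K * ∫ t in (0:ℝ)..(2 * π), cos t * u t) * (sin θ * V θ)
        + (K * ∫ t in (0:ℝ)..(2 * π), sin t * u t) * (cos θ * V θ) := by
    rw [Jconv_eq K hu]; ring
  simp only [h]
  rw [intervalIntegral.integral_add ((by fun_prop : Continuous _).intervalIntegrable _ _)
      ((by fun_prop : Continuous _).intervalIntegrable _ _),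
    intervalIntegral.integral_const_mul, intervalIntegral.integral_const_mul,
    integral_sin_mul_of_hasDerivAt hV hv hV2, integral_cos_mul_of_hasDerivAt hV hv hV2]
  ring

lemma integral_Jconv_mul_comm (K : ℝ) {u v U V : ℝ → ℝ} (hu : Continuous u) (hv : Continuous v)
    (hU : ∀ t, HasDerivAt U (u t) t) (hV : ∀ t, HasDerivAt V (v t) t)
    (hU2 : U (2 * π) = U 0) (hV2 : V (2 * π) = V 0) :
    ∫ θ in (0:ℝ)..(2 * π), Jconv K u θ * V θ = ∫ θ in (0:ℝ)..(2 * π), Jconv K v θ * U θ := by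
  rw [integral_Jconv_mul K hu hv hV hV2, integral_Jconv_mul K hv hu hU hU2]
  ring

/-- A primitive of `L_q u`. As `∫ V/q = 0`, `∫ primitiveLq K r u * V / q` is `(L_q u, v)_{−1,1/q}`
whatever the additive normalization of the primitive. -/
noncomputable def primitiveLq (K r : ℝ) (u : ℝ → ℝ) (θ : ℝ) : ℝ :=
  (1 / 2) * deriv u θ - u θ * Jconv K (q K r) θ - q K r θ * Jconv K u θ

lemma continuous_primitiveLq (K r : ℝ) {u : ℝ → ℝ} (hu : ContDiff ℝ 1 u) :
    Continuous (primitiveLq K r u) := by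
  have := hu.continuous_deriv le_rfl
  have := continuous_Jconv K hu.continuous
  have := continuous_Jconv K (continuous_q K r)
  have := continuous_q K r
  unfold primitiveLq
  fun_prop

lemma hasDerivAt_cross_div_q {K r : ℝ} (hfix : r = besselI 1 (2 * K * r) / besselI 0 (2 * K * r))
    {u v U V : ℝ → ℝ} {θ : ℝ} (hu : DifferentiableAt ℝ u θ) (hv : DifferentiableAt ℝ v θ)
    (hU : HasDerivAt U (u θ) θ) (hV : HasDerivAt V (v θ) θ) :
    HasDerivAt (fun θ => (u θ * V θ - v θ * U θ) / (2 * q K r θ))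
      (primitiveLq K r u θ * V θ / q K r θ - primitiveLq K r v θ * U θ / q K r θ
        + (Jconv K u θ * V θ - Jconv K v θ * U θ)) θ := by
  have hq := (q_pos K r θ).ne'
  refine (((hu.hasDerivAt.mul hV).sub (hv.hasDerivAt.mul hU)).div
    ((hasDerivAt_q K r θ).const_mul 2) (by positivity)).congr_deriv ?_
  simp only [primitiveLq, Jconv_q hfix, Pi.sub_apply, Pi.mul_apply]
  field_simp
  ring

lemma integral_primitiveLq_mul_sub {K r : ℝ}
    (hfix : r = besselI 1 (2 * K * r) / besselI 0 (2 * K * r)) {u v U V : ℝ → ℝ}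
    (hu : ContDiff ℝ 1 u) (hv : ContDiff ℝ 1 v)
    (hU : ∀ θ, HasDerivAt U (u θ) θ) (hV : ∀ θ, HasDerivAt V (v θ) θ)
    (hu2 : u (2 * π) = u 0) (hv2 : v (2 * π) = v 0)
    (hU2 : U (2 * π) = U 0) (hV2 : V (2 * π) = V 0) :
    (∫ θ in (0:ℝ)..(2 * π), primitiveLq K r u θ * V θ / q K r θ)
        - ∫ θ in (0:ℝ)..(2 * π), primitiveLq K r v θ * U θ / q K r θ
      = (∫ θ in (0:ℝ)..(2 * π), Jconv K v θ * U θ)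
        - ∫ θ in (0:ℝ)..(2 * π), Jconv K u θ * V θ := by
  have hUc : Continuous U := continuous_iff_continuousAt.2 fun t => (hU t).continuousAt
  have hVc : Continuous V := continuous_iff_continuousAt.2 fun t => (hV t).continuousAt
  have hqne (θ : ℝ) : q K r θ ≠ 0 := (q_pos K r θ).ne'
  have hPu : IntervalIntegrable (fun θ => primitiveLq K r u θ * V θ / q K r θ) volume 0 (2 * π) :=
    (((continuous_primitiveLq K r hu).mul hVc).div (continuous_q K r) hqne).intervalIntegrable _ _
  have hPv : IntervalIntegrable (fun θ => primitiveLq K r v θ * U θ / q K r θ) volume 0 (2 * π) :=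
    (((continuous_primitiveLq K r hv).mul hUc).div (continuous_q K r) hqne).intervalIntegrable _ _
  have hJu : IntervalIntegrable (fun θ => Jconv K u θ * V θ) volume 0 (2 * π) :=
    ((continuous_Jconv K hu.continuous).mul hVc).intervalIntegrable _ _
  have hJv : IntervalIntegrable (fun θ => Jconv K v θ * U θ) volume 0 (2 * π) :=
    ((continuous_Jconv K hv.continuous).mul hUc).intervalIntegrable _ _
  have hFTC := intervalIntegral.integral_eq_sub_of_hasDerivAt
    (fun θ _ => hasDerivAt_cross_div_q hfix (hu.differentiable one_ne_zero θ)
      (hv.differentiable one_ne_zero θ) (hU θ) (hV θ))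
    ((hPu.sub hPv).add (hJu.sub hJv))
  rw [intervalIntegral.integral_add (hPu.sub hPv) (hJu.sub hJv),
    intervalIntegral.integral_sub hPu hPv, intervalIntegral.integral_sub hJu hJv,
    hu2, hv2, hU2, hV2, q_two_pi, sub_self] at hFTC
  linarith

theorem Lq_symmetric_general (K r : ℝ)
    (hfix : r = besselI 1 (2 * K * r) / besselI 0 (2 * K * r))
    (u v U V : ℝ → ℝ)
    (hu : ContDiff ℝ 2 u) (hv : ContDiff ℝ 2 v)
    (huper : Function.Periodic u (2 * π)) (hvper : Function.Periodic v (2 * π))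
    (hu0 : (∫ θ in (0:ℝ)..(2 * π), u θ) = 0)
    (hv0 : (∫ θ in (0:ℝ)..(2 * π), v θ) = 0)
    (hU : ∀ θ, HasDerivAt U (u θ) θ)
    (hV : ∀ θ, HasDerivAt V (v θ) θ) :
    (∫ θ in (0:ℝ)..(2 * π),
        ((1 / 2) * deriv u θ - u θ * Jconv K (q K r) θ - q K r θ * Jconv K u θ)
          * V θ / q K r θ)
      = ∫ θ in (0:ℝ)..(2 * π),
        ((1 / 2) * deriv v θ - v θ * Jconv K (q K r) θ - q K r θ * Jconv K v θ)
          * U θ / q K r θ := by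
  have hU2 : U (2 * π) = U 0 := eq_of_hasDerivAt_of_integral_eq_zero hU hu.continuous hu0
  have hV2 : V (2 * π) = V 0 := eq_of_hasDerivAt_of_integral_eq_zero hV hv.continuous hv0
  have key := integral_primitiveLq_mul_sub hfix (hu.of_le one_le_two) (hv.of_le one_le_two)
    hU hV (by simpa using huper 0) (by simpa using hvper 0) hU2 hV2
  rw [integral_Jconv_mul_comm K hv.continuous hu.continuous hV hU hV2 hU2, sub_self] at key
  exact sub_eq_zero.mp key

/-- Symmetry of the linearized operator `L_q u = (1/2)u'' − (u (J*q) + q (J*u))'` in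
the weighted space `H_{−1,1/q}`: with `U, V` the primitives of `u, v` normalized by
`∫ U/q = ∫ V/q = 0`, one has `(L_q u, v)_{−1,1/q} = (u, L_q v)_{−1,1/q}`.  Since
`(1/2)u' − u (J*q) − q (J*u)` is a primitive of `L_q u` and `∫ V/q = 0`, this reads
as the stated integral identity. -/
theorem Lq_symmetric (K r : ℝ) (hK : 1 < K) (hr : 0 < r)
    (hfix : r = besselI 1 (2 * K * r) / besselI 0 (2 * K * r))
    (u v U V : ℝ → ℝ)
    (hu : ContDiff ℝ 2 u) (hv : ContDiff ℝ 2 v)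
    (huper : Function.Periodic u (2 * π)) (hvper : Function.Periodic v (2 * π))
    (hu0 : (∫ θ in (0:ℝ)..(2 * π), u θ) = 0)
    (hv0 : (∫ θ in (0:ℝ)..(2 * π), v θ) = 0)
    (hU : ∀ θ, HasDerivAt U (u θ) θ)
    (hV : ∀ θ, HasDerivAt V (v θ) θ)
    (hUc : (∫ θ in (0:ℝ)..(2 * π), U θ / q K r θ) = 0)
    (hVc : (∫ θ in (0:ℝ)..(2 * π), V θ / q K r θ) = 0) :
    (∫ θ in (0:ℝ)..(2 * π),
        ((1 / 2) * deriv u θ - u θ * Jconv K (q K r) θ - q K r θ * Jconv K u θ)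
          * V θ / q K r θ)
      = ∫ θ in (0:ℝ)..(2 * π),
        ((1 / 2) * deriv v θ - v θ * Jconv K (q K r) θ - q K r θ * Jconv K v θ)
          * U θ / q K r θ :=
  Lq_symmetric_general K r hfix u v U V hu hv huper hvper hu0 hv0 hU hV
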